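/- Let A be a magmatic algebra over a field K with a reduced unital-infinitesimal coproduct δ. For all n ≥ 2 and arbitrary elements x₁, …, xₙ ∈ A: δ(ωⁿ(x₁,…,xₙ)) = Σ_{i=1}^{n−1} ωⁱ(x₁,…,xᵢ) ⊗ ω^{n−i}(x_{i+1},…,xₙ) + Σ_{j=1}^{n} (Lⱼ ⊗ Rⱼ)(δ(xⱼ)), where Lⱼ : A → A is the linear map Lⱼ(a) = ωʲ(x₁,…,x_{j−1},a) and Rⱼ : A → A is the linear map Rⱼ(a) = ω^{n−j+1}(a, x_{j+1},…,xₙ). -/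

import Mathlib

open TensorProduct

/-- A K-linear map `δ : A → A ⊗ A` satisfies the reduced unital-infinitesimal
compatibility relation if
`δ(a·b) = (id ⊗ mulRight b)(δ a) + (mulLeft a ⊗ id)(δ b) + a ⊗ b` for all `a b`. -/
def IsUICoproduct (K : Type*) [Field K] (A : Type*) [NonUnitalNonAssocRing A]
    [Module K A] [SMulCommClass K A A] [IsScalarTower K A A]
    (δ : A →ₗ[K] A ⊗[K] A) : Prop :=
  ∀ a b : A,
    δ (a * b) =
      TensorProduct.map LinearMap.id (LinearMap.mulRight K b) (δ a) +
      TensorProduct.map (LinearMap.mulLeft K a) LinearMap.id (δ b) +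
      a ⊗ₜ[K] b

/-- The left comb `ωⁿ(x₁,…,xₙ) = ((x₁·x₂)·x₃)⋯·xₙ`, given on the (nonempty) list
of its arguments (junk value `0` on the empty list). -/
def leftComb {A : Type*} [Mul A] [Zero A] : List A → A
  | [] => 0
  | x :: xs => xs.foldl (· * ·) x

/-!
Induction on the number of factors: since `ωⁿ⁺¹(x₁,…,xₙ₊₁) = ωⁿ(x₁,…,xₙ)·xₙ₊₁`, the u.i. relation
expresses `δ ωⁿ⁺¹` through `δ ωⁿ` and `δ xₙ₊₁`. Applying `id ⊗ mulRight xₙ₊₁` turns each term of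
the formula for `ωⁿ` into the corresponding term for `ωⁿ⁺¹`, and the two remaining terms
`ωⁿ ⊗ xₙ₊₁` and `(mulLeft ωⁿ ⊗ id)(δ xₙ₊₁)` are the new top terms of the two sums.
-/

section LeftComb

variable {A : Type*}

section Mul

variable [Mul A] [Zero A]

@[simp]
lemma leftComb_singleton (x : A) : leftComb [x] = x := rfl

lemma leftComb_cons_append_singleton (a x : A) (s : List A) :
    leftComb (a :: (s ++ [x])) = leftComb (a :: s) * x := by
  simp [leftComb, List.foldl_append]

lemma leftComb_append_singleton {s : List A} (hs : s ≠ []) (x : A) :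
    leftComb (s ++ [x]) = leftComb s * x := by
  obtain ⟨a, s, rfl⟩ := List.exists_cons_of_ne_nil hs
  exact leftComb_cons_append_singleton a x s

end Mul

section Semiring

variable [NonUnitalNonAssocSemiring A] (K : Type*) [CommSemiring K] [Module K A]

section HeadMap

variable [IsScalarTower K A A]

/-- `a ↦ leftComb (a :: s)`, the map `Rⱼ` for `s = [xⱼ₊₁,…,xₙ]`. -/
def leftCombHeadMap : List A → A →ₗ[K] A
  | [] => LinearMap.id
  | x :: xs => leftCombHeadMap xs ∘ₗ LinearMap.mulRight K x

lemma leftCombHeadMap_apply : ∀ (s : List A) (a : A), leftCombHeadMap K s a = leftComb (a :: s)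
  | [], _ => rfl
  | x :: xs, a => leftCombHeadMap_apply xs (a * x)

lemma leftCombHeadMap_append_singleton (s : List A) (x : A) :
    leftCombHeadMap K (s ++ [x]) = LinearMap.mulRight K x ∘ₗ leftCombHeadMap K s := by
  ext a
  simp [leftCombHeadMap_apply, leftComb_cons_append_singleton]

lemma sum_tmul_leftComb_take_drop_append_singleton {s : List A} (hs : s ≠ []) (x : A) :
    ∑ i ∈ Finset.Icc 1 s.length,
        leftComb ((s ++ [x]).take i) ⊗ₜ[K] leftComb ((s ++ [x]).drop i) =
      TensorProduct.map LinearMap.id (LinearMap.mulRight K x)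
        (∑ i ∈ Finset.Icc 1 (s.length - 1), leftComb (s.take i) ⊗ₜ[K] leftComb (s.drop i)) +
      leftComb s ⊗ₜ[K] x := by
  have hlen : s.length - 1 + 1 = s.length := Nat.succ_pred_eq_of_ne_zero (by simpa using hs)
  rw [← hlen, Finset.sum_Icc_succ_top (Nat.le_add_left 1 _), hlen, map_sum]
  congr 1
  · refine Finset.sum_congr rfl fun i hi => ?_
    have hi : i < s.length := by grind
    have hdrop : s.drop i ≠ [] := by simpa using hi
    rw [List.take_append_of_le_length hi.le, List.drop_append_of_le_length hi.le,
      leftComb_append_singleton hdrop, map_tmul, LinearMap.id_apply, LinearMap.mulRight_apply]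
  · simp

end HeadMap

section LastMap

variable [SMulCommClass K A A]

/-- `a ↦ leftComb (s ++ [a])`, the map `Lⱼ` for `s = [x₁,…,xⱼ₋₁]`. -/
def leftCombLastMap : List A → A →ₗ[K] A
  | [] => LinearMap.id
  | s@(_ :: _) => LinearMap.mulLeft K (leftComb s)

lemma leftCombLastMap_of_ne_nil {s : List A} (hs : s ≠ []) :
    leftCombLastMap K s = LinearMap.mulLeft K (leftComb s) := by
  obtain ⟨a, s, rfl⟩ := List.exists_cons_of_ne_nil hs
  rfl

lemma leftCombLastMap_apply (s : List A) (a : A) :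
    leftCombLastMap K s a = leftComb (s ++ [a]) := by
  rcases eq_or_ne s [] with rfl | hs
  · rfl
  · rw [leftCombLastMap_of_ne_nil K hs, LinearMap.mulLeft_apply, leftComb_append_singleton hs]

end LastMap

variable [SMulCommClass K A A] [IsScalarTower K A A]

lemma sum_map_leftCombLastMap_headMap_append_singleton (f : A → A ⊗[K] A)
    {s : List A} (hs : s ≠ []) (x : A) :
    ∑ j ∈ Finset.Icc 1 (s.length + 1),
        TensorProduct.map (leftCombLastMap K ((s ++ [x]).take (j - 1)))
          (leftCombHeadMap K ((s ++ [x]).drop j)) (f ((s ++ [x]).getD (j - 1) 0)) =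
      TensorProduct.map LinearMap.id (LinearMap.mulRight K x)
        (∑ j ∈ Finset.Icc 1 s.length,
          TensorProduct.map (leftCombLastMap K (s.take (j - 1)))
            (leftCombHeadMap K (s.drop j)) (f (s.getD (j - 1) 0))) +
      TensorProduct.map (LinearMap.mulLeft K (leftComb s)) LinearMap.id (f x) := by
  rw [Finset.sum_Icc_succ_top (Nat.le_add_left 1 _), map_sum]
  congr 1
  · refine Finset.sum_congr rfl fun j hj => ?_
    obtain ⟨hj1, hj⟩ := Finset.mem_Icc.mp hj
    rw [← LinearMap.comp_apply, ← TensorProduct.map_comp, LinearMap.id_comp,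
      List.take_append_of_le_length (by omega), List.drop_append_of_le_length hj,
      List.getD_append _ _ _ _ (by omega), leftCombHeadMap_append_singleton]
  · simp [leftCombLastMap_of_ne_nil K hs, leftCombHeadMap]

end Semiring

theorem IsUICoproduct.apply_leftComb [NonUnitalNonAssocRing A] {K : Type*} [Field K] [Module K A]
    [SMulCommClass K A A] [IsScalarTower K A A] {δ : A →ₗ[K] A ⊗[K] A} (hui : IsUICoproduct K A δ)
    (l : List A) :
    δ (leftComb l) =
      ∑ i ∈ Finset.Icc 1 (l.length - 1), leftComb (l.take i) ⊗ₜ[K] leftComb (l.drop i) +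
      ∑ j ∈ Finset.Icc 1 l.length,
        TensorProduct.map (leftCombLastMap K (l.take (j - 1)))
          (leftCombHeadMap K (l.drop j)) (δ (l.getD (j - 1) 0)) := by
  induction l using List.reverseRecOn with
  | nil => simp [leftComb]
  | append_singleton s x ih =>
    rcases eq_or_ne s [] with rfl | hs
    · simp [leftCombLastMap, leftCombHeadMap]
    rw [leftComb_append_singleton hs, hui, ih, List.length_append, List.length_singleton,
      Nat.add_sub_cancel, sum_tmul_leftComb_take_drop_append_singleton K hs,
      sum_map_leftCombLastMap_headMap_append_singleton K δ hs, map_add]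
    abel

end LeftComb

theorem ui_coproduct_leftComb_general_general
    (K : Type*) [Field K] (A : Type*) [NonUnitalNonAssocRing A]
    [Module K A] [SMulCommClass K A A] [IsScalarTower K A A]
    (δ : A →ₗ[K] A ⊗[K] A) (hui : IsUICoproduct K A δ)
    (n : ℕ) (l : List A) (hl : l.length = n)
    (L R : ℕ → A →ₗ[K] A)
    (hL : ∀ j ∈ Finset.Icc 1 n, ∀ a : A, L j a = leftComb (l.take (j - 1) ++ [a]))
    (hR : ∀ j ∈ Finset.Icc 1 n, ∀ a : A, R j a = leftComb (a :: l.drop j)) :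
    δ (leftComb l) =
      ∑ i ∈ Finset.Icc 1 (n - 1),
        (leftComb (l.take i)) ⊗ₜ[K] (leftComb (l.drop i)) +
      ∑ j ∈ Finset.Icc 1 n,
        TensorProduct.map (L j) (R j) (δ (l.getD (j - 1) 0)) := by
  subst hl
  rw [hui.apply_leftComb]
  congr 1
  refine Finset.sum_congr rfl fun j hj => ?_
  have hLj : leftCombLastMap K (l.take (j - 1)) = L j := by
    ext a; rw [leftCombLastMap_apply, hL j hj a]
  have hRj : leftCombHeadMap K (l.drop j) = R j := by
    ext a; rw [leftCombHeadMap_apply, hR j hj a]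
  rw [hLj, hRj]

/-- The coproduct of a left comb of arbitrary elements `x₁,…,xₙ` (the entries of the
list `l`, so `xⱼ = l.getD (j-1) 0`):
`δ(ωⁿ(x₁,…,xₙ)) = Σ_{i=1}^{n-1} ωⁱ(x₁,…,xᵢ) ⊗ ω^{n-i}(x_{i+1},…,xₙ)
  + Σ_{j=1}^{n} (Lⱼ ⊗ Rⱼ)(δ xⱼ)`,
where `Lⱼ(a) = ωʲ(x₁,…,x_{j-1},a)` and `Rⱼ(a) = ω^{n-j+1}(a,x_{j+1},…,xₙ)`. -/
theorem ui_coproduct_leftComb_general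
    (K : Type*) [Field K] (A : Type*) [NonUnitalNonAssocRing A]
    [Module K A] [SMulCommClass K A A] [IsScalarTower K A A]
    (δ : A →ₗ[K] A ⊗[K] A) (hui : IsUICoproduct K A δ)
    (n : ℕ) (hn : 2 ≤ n) (l : List A) (hl : l.length = n)
    (L R : ℕ → A →ₗ[K] A)
    (hL : ∀ j ∈ Finset.Icc 1 n, ∀ a : A, L j a = leftComb (l.take (j - 1) ++ [a]))
    (hR : ∀ j ∈ Finset.Icc 1 n, ∀ a : A, R j a = leftComb (a :: l.drop j)) :
    δ (leftComb l) =
      ∑ i ∈ Finset.Icc 1 (n - 1),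
        (leftComb (l.take i)) ⊗ₜ[K] (leftComb (l.drop i)) +
      ∑ j ∈ Finset.Icc 1 n,
        TensorProduct.map (L j) (R j) (δ (l.getD (j - 1) 0)) :=
  ui_coproduct_leftComb_general_general K A δ hui n l hl L R hL hR
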